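/- arXiv:1710.08894 — 5 statements merged into one kernel-verified Lean document; each statement's English description precedes it below -/
import Mathlib

section
/- Let K̄ be an (n+1)×(n+1) real symmetric positive semidefinite matrix, a > 0, and H̄ := (K̄ + aI)⁻¹K̄ with entries h̄_{ij} (writing h̄_i for h̄_{ii}). Then for every i ∈ {1,…,n}, B_i := √(1 − h̄_{n+1,n+1}) + h̄_{i,n+1}/√(1 − h̄_{ii}) > 0. -/
/-!
Writing `M = K̄ + aI`, the hat matrix is `H̄ = M⁻¹K̄ = I - a M⁻¹`, so with `N = M⁻¹` (positive
definite) we get `1 - h̄_{n+1,n+1} = a N_{n+1,n+1}`, `1 - h̄_{ii} = a N_{ii}` and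
`h̄_{i,n+1} = -a N_{i,n+1}`. Hence `B_i = √a (√N_{n+1,n+1} - N_{i,n+1} / √N_{ii})`, which is
positive by the strict Cauchy–Schwarz inequality `N_{i,n+1}² < N_{ii} N_{n+1,n+1}` for the
positive definite matrix `N`.
-/

open Matrix

theorem Matrix.PosDef.apply_sq_lt_mul_apply {m : Type*} {N : Matrix m m ℝ} (hN : N.PosDef)
    {i j : m} (hij : i ≠ j) : N i j ^ 2 < N i i * N j j := by
  have hminor := (hN.submatrix (e := ![i, j]) <| by
    intro k l; fin_cases k <;> fin_cases l <;> simp [hij, hij.symm]).det_pos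
  have hsymm : N j i = N i j := by simpa using hN.isHermitian.apply i j
  rw [det_fin_two] at hminor
  simp only [submatrix_apply, Matrix.cons_val_zero, Matrix.cons_val_one, hsymm] at hminor
  linarith

theorem Matrix.inv_add_smul_one_mul_self {n R : Type*} [Fintype n] [DecidableEq n] [CommRing R]
    {A : Matrix n n R} {a : R} (h : IsUnit (A + a • 1).det) :
    (A + a • 1)⁻¹ * A = 1 - a • (A + a • 1)⁻¹ := by
  calc (A + a • 1)⁻¹ * A = (A + a • 1)⁻¹ * ((A + a • 1) - a • 1) := by rw [add_sub_cancel_right]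
    _ = 1 - a • (A + a • 1)⁻¹ := by
      rw [Matrix.mul_sub, nonsing_inv_mul _ h, Matrix.mul_smul, Matrix.mul_one]

theorem Real.sqrt_sub_div_sqrt_pos {p q r : ℝ} (hp : 0 < p) (h : r ^ 2 < p * q) :
    0 < √q - r / √p := by
  rw [sub_pos, div_lt_iff₀ (Real.sqrt_pos.mpr hp), ← Real.sqrt_mul' _ hp.le, mul_comm q]
  exact Real.lt_sqrt_of_sq_lt h

theorem krrpm_B_pos (n : ℕ) (Kbar : Matrix (Fin (n + 1)) (Fin (n + 1)) ℝ)
    (hK : Kbar.PosSemidef) (a : ℝ) (ha : 0 < a) :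
    ∀ i : Fin n,
      Real.sqrt (1 -
          ((Kbar + a • (1 : Matrix (Fin (n + 1)) (Fin (n + 1)) ℝ))⁻¹ * Kbar)
            (Fin.last n) (Fin.last n)) +
        ((Kbar + a • (1 : Matrix (Fin (n + 1)) (Fin (n + 1)) ℝ))⁻¹ * Kbar)
            i.castSucc (Fin.last n) /
          Real.sqrt (1 -
            ((Kbar + a • (1 : Matrix (Fin (n + 1)) (Fin (n + 1)) ℝ))⁻¹ * Kbar)
              i.castSucc i.castSucc) > 0 := by
  intro i
  have hM : (Kbar + a • 1).PosDef := PosDef.posSemidef_add hK (PosDef.one.smul ha)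
  have hN : (Kbar + a • 1)⁻¹.PosDef := hM.inv
  rw [inv_add_smul_one_mul_self ((isUnit_iff_isUnit_det _).mp hM.isUnit)]
  set N := (Kbar + a • (1 : Matrix (Fin (n + 1)) (Fin (n + 1)) ℝ))⁻¹
  have hne : i.castSucc ≠ Fin.last n := (Fin.castSucc_lt_last i).ne
  have hB : √(1 - (1 - a • N) (Fin.last n) (Fin.last n)) +
        (1 - a • N) i.castSucc (Fin.last n) / √(1 - (1 - a • N) i.castSucc i.castSucc) =
      √a * (√(N (Fin.last n) (Fin.last n)) -
        N i.castSucc (Fin.last n) / √(N i.castSucc i.castSucc)) := by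
    simp only [Matrix.sub_apply, Matrix.smul_apply, one_apply_eq, one_apply_ne hne, sub_sub_cancel,
      smul_eq_mul, zero_sub, Real.sqrt_mul ha.le]
    field_simp
    rw [Real.sq_sqrt ha.le]
    ring
  rw [hB, gt_iff_lt]
  exact mul_pos (Real.sqrt_pos.mpr ha)
    (Real.sqrt_sub_div_sqrt_pos hN.diag_pos (hN.apply_sq_lt_mul_apply hne))
end

section
/- Let K be an n×n real symmetric positive semidefinite matrix, k ∈ ℝⁿ, κ ∈ ℝ with K̄ = [[K, k],[k', κ]] symmetric positive semidefinite, a > 0, H̄ := (K̄ + aI_{n+1})⁻¹K̄, and d := 1/(κ + a − k'(K+aI)⁻¹k). Then the bottom-right entry of H̄ satisfies 1 − h̄_{n+1,n+1} = ad. -/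
/-!
Writing `K̄ = (K̄ + aI) - aI` gives `H̄ = I - a (K̄ + aI)⁻¹`, so `1 - h̄ₙ₊₁,ₙ₊₁` is `a` times the
bottom-right entry of `(K̄ + aI)⁻¹`. Block inversion around the positive definite top-left block
`K + aI` identifies that entry as the reciprocal of the Schur complement `κ + a - k'(K + aI)⁻¹k`.
-/

open Matrix

namespace Matrix

variable {l m α : Type*} [Fintype l] [Fintype m] [DecidableEq l] [DecidableEq m]

theorem inv_add_smul_one_mul_self_s13 [CommRing α] {K : Matrix m m α} {a : α}
    (h : IsUnit (K + a • 1)) : (K + a • 1)⁻¹ * K = 1 - a • (K + a • 1)⁻¹ := by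
  calc (K + a • 1)⁻¹ * K = (K + a • 1)⁻¹ * (K + a • 1 - a • 1) := by rw [add_sub_cancel_right]
    _ = 1 - a • (K + a • 1)⁻¹ := by
      rw [Matrix.mul_sub, Matrix.nonsing_inv_mul _ ((isUnit_iff_isUnit_det _).mp h),
        Matrix.mul_smul, Matrix.mul_one]

/-- No invertibility of the whole matrix is needed: if the Schur complement is singular, so is the
block matrix, and both sides are the junk value `0`. -/
theorem toBlocks₂₂_inv_fromBlocks [CommRing α] (A : Matrix m m α) (B : Matrix m l α)
    (C : Matrix l m α) (D : Matrix l l α) [Invertible A] :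
    (fromBlocks A B C D)⁻¹.toBlocks₂₂ = (D - C * ⅟A * B)⁻¹ := by
  by_cases hS : IsUnit (D - C * ⅟A * B)
  · have := hS.invertible
    have := fromBlocks₁₁Invertible A B C D
    rw [← invOf_eq_nonsing_inv, ← invOf_eq_nonsing_inv, invOf_fromBlocks₁₁_eq,
      toBlocks_fromBlocks₂₂]
  · have hM : ¬IsUnit (fromBlocks A B C D) := isUnit_fromBlocks_iff_of_invertible₁₁.not.mpr hS
    rw [nonsing_inv_apply_not_isUnit _ ((isUnit_iff_isUnit_det _).not.mp hM),
      nonsing_inv_apply_not_isUnit _ ((isUnit_iff_isUnit_det _).not.mp hS)]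
    rfl

theorem inv_fromBlocks_replicate_apply_inr_inr [Field α] {ι : Type*} [Unique ι] [DecidableEq ι]
    (A : Matrix m m α) (u v : m → α) (c : α) [Invertible A] (i j : ι) :
    (fromBlocks A (replicateCol ι u) (replicateRow ι v) (of fun _ _ => c))⁻¹ (.inr i) (.inr j) =
      (c - v ⬝ᵥ (A⁻¹ *ᵥ u))⁻¹ := by
  refine (congr_fun₂ (toBlocks₂₂_inv_fromBlocks A _ _ _) i j).trans ?_
  rw [inv_subsingleton, Subsingleton.elim i j, diagonal_apply_eq, Ring.inverse_eq_inv',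
    sub_apply, of_apply, invOf_eq_nonsing_inv, Matrix.mul_assoc, ← replicateCol_mulVec,
    replicateRow_mul_replicateCol_apply]

end Matrix

theorem bordered_hat_bottom_right (n : ℕ)
    (K : Matrix (Fin n) (Fin n) ℝ) (k : Fin n → ℝ) (κ : ℝ)
    (Kbar : Matrix (Fin n ⊕ Fin 1) (Fin n ⊕ Fin 1) ℝ)
    (hKbar : Kbar = Matrix.fromBlocks K (Matrix.replicateCol (Fin 1) k) (Matrix.replicateRow (Fin 1) k)
        (Matrix.of fun _ _ => κ))
    (hpsd : Kbar.PosSemidef)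
    (a : ℝ) (ha : 0 < a)
    (d : ℝ)
    (hd : d = 1 / (κ + a - k ⬝ᵥ ((K + a • (1 : Matrix (Fin n) (Fin n) ℝ))⁻¹ *ᵥ k))) :
    1 - ((Kbar + a • (1 : Matrix (Fin n ⊕ Fin 1) (Fin n ⊕ Fin 1) ℝ))⁻¹ * Kbar)
        (Sum.inr 0) (Sum.inr 0) = a * d := by
  have hM : (Kbar + a • 1).PosDef := PosDef.posSemidef_add hpsd (PosDef.one.smul ha)
  have hblocks : Kbar + a • 1 = fromBlocks (K + a • 1) (replicateCol (Fin 1) k)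
      (replicateRow (Fin 1) k) (of fun _ _ => κ + a) := by
    rw [hKbar, ← fromBlocks_one, fromBlocks_smul, fromBlocks_add]
    congr 1 <;> ext <;> simp [Fin.fin_one_eq_zero]
  have hA : (K + a • 1).PosDef := (hblocks ▸ hM).submatrix Sum.inl_injective
  let := hA.isUnit.invertible
  have hcorner : (Kbar + a • 1)⁻¹ (.inr 0) (.inr 0) = d := by
    rw [hblocks, hd, one_div]
    exact inv_fromBlocks_replicate_apply_inr_inr _ _ _ _ _ _
  rw [inv_add_smul_one_mul_self_s13 hM.isUnit, Matrix.sub_apply, Matrix.smul_apply, hcorner,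
    one_apply_eq, smul_eq_mul, sub_sub_cancel]
end

section
/- Let K, k, κ, K̄, a, d be as in the bordered-kernel setting, H := (K+aI)⁻¹K and H̄ := (K̄+aI_{n+1})⁻¹K̄. Then H̄ equals the block matrix [[H − ad(K+aI)⁻¹kk'(K+aI)⁻¹, ad(K+aI)⁻¹k],[ad·k'(K+aI)⁻¹, dκ − dk'(K+aI)⁻¹k]]. -/
/-!
Writing `M := K̄ + aI`, one has `M⁻¹ K̄ = I - a M⁻¹`, and likewise `H = I - a (K + aI)⁻¹`.
Since `M` is the bordering of `K + aI` by `k` and `κ + a`, its inverse is given by the Schur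
complement `κ + a - k'(K + aI)⁻¹k = 1/d`, which is nonzero because
`det M = det (K + aI) · (κ + a - k'(K + aI)⁻¹k)` and `M` is positive definite.
Substituting this inverse into `I - a M⁻¹` yields the four blocks.
-/

open Matrix

namespace Matrix

variable {m ι R : Type*} [Fintype m]

lemma replicateRow_mul_mul_replicateCol [CommSemiring R] (A : Matrix m m R) (u v : m → R) :
    replicateRow ι v * A * replicateCol ι u = of fun _ _ => v ⬝ᵥ A *ᵥ u := by
  rw [Matrix.mul_assoc, ← replicateCol_mulVec, replicateRow_mul_replicateCol]

lemma PosSemidef.posDef_add_smul_one {n : Type*} [Fintype n] [DecidableEq n] {M : Matrix n n ℝ}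
    (hM : M.PosSemidef) {a : ℝ} (ha : 0 < a) : (M + a • (1 : Matrix n n ℝ)).PosDef :=
  PosDef.posSemidef_add hM (PosDef.one.smul ha)

section CommRing

variable [CommRing R]

lemma of_const_eq_smul_one [DecidableEq ι] [Unique ι] (x : R) :
    (of fun _ _ => x : Matrix ι ι R) = x • 1 := by
  ext i j
  simp [Subsingleton.elim i j]

lemma of_const_sub_replicateRow_mul_mul_replicateCol [DecidableEq ι] [Unique ι]
    (A : Matrix m m R) (u v : m → R) (c : R) :
    (of fun _ _ => c) - replicateRow ι v * A * replicateCol ι u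
      = (c - v ⬝ᵥ A *ᵥ u) • (1 : Matrix ι ι R) := by
  rw [replicateRow_mul_mul_replicateCol, of_const_eq_smul_one, of_const_eq_smul_one, sub_smul]

variable [DecidableEq m]

lemma inv_add_smul_one_mul {M : Matrix m m R} {a : R}
    (h : IsUnit (M + a • (1 : Matrix m m R)).det) :
    (M + a • (1 : Matrix m m R))⁻¹ * M = 1 - a • (M + a • (1 : Matrix m m R))⁻¹ := by
  calc (M + a • (1 : Matrix m m R))⁻¹ * M
      = (M + a • (1 : Matrix m m R))⁻¹ * ((M + a • 1) - a • 1) := by rw [add_sub_cancel_right]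
    _ = 1 - a • (M + a • (1 : Matrix m m R))⁻¹ := by
      rw [Matrix.mul_sub, nonsing_inv_mul _ h, Matrix.mul_smul, Matrix.mul_one]

lemma det_fromBlocks_replicateCol_replicateRow [Fintype ι] [DecidableEq ι] [Unique ι]
    (A : Matrix m m R) (hA : IsUnit A.det) (u v : m → R) (c : R) :
    (fromBlocks A (replicateCol ι u) (replicateRow ι v) (of fun _ _ => c)).det
      = A.det * (c - v ⬝ᵥ A⁻¹ *ᵥ u) := by
  let := A.invertibleOfIsUnitDet hA
  rw [det_fromBlocks₁₁, invOf_eq_nonsing_inv, of_const_sub_replicateRow_mul_mul_replicateCol]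
  simp

end CommRing

lemma inv_fromBlocks_replicateCol_replicateRow [DecidableEq m] [Fintype ι] [DecidableEq ι]
    [Unique ι] [Field R] (A : Matrix m m R) (hA : IsUnit A.det) (u v : m → R) (c : R)
    (hs : c - v ⬝ᵥ A⁻¹ *ᵥ u ≠ 0) :
    (fromBlocks A (replicateCol ι u) (replicateRow ι v) (of fun _ _ => c))⁻¹ =
      let d := (c - v ⬝ᵥ A⁻¹ *ᵥ u)⁻¹
      fromBlocks (A⁻¹ + d • (A⁻¹ * replicateCol ι u * replicateRow ι v * A⁻¹))
        (-d • (A⁻¹ * replicateCol ι u)) (-d • (replicateRow ι v * A⁻¹)) (of fun _ _ => d) := by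
  let := A.invertibleOfIsUnitDet hA
  have hS := of_const_sub_replicateRow_mul_mul_replicateCol (ι := ι) A⁻¹ u v c
  have hSinv : ((c - v ⬝ᵥ A⁻¹ *ᵥ u) • (1 : Matrix ι ι R))⁻¹ = (c - v ⬝ᵥ A⁻¹ *ᵥ u)⁻¹ • 1 :=
    inv_eq_left_inv (by simp [smul_smul, hs])
  let := invertibleOfIsUnitDet ((of fun _ _ => c) - replicateRow ι v * ⅟A * replicateCol ι u)
    (by rw [invOf_eq_nonsing_inv, hS]; simp [hs])
  let := fromBlocks₁₁Invertible A (replicateCol ι u) (replicateRow ι v) (of fun _ _ => c)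
  rw [← invOf_eq_nonsing_inv, invOf_fromBlocks₁₁_eq]
  simp only [invOf_eq_nonsing_inv, hS, hSinv, of_const_eq_smul_one (ι := ι) (c - _)⁻¹]
  simp only [Matrix.mul_smul, Matrix.smul_mul, Matrix.mul_one, Matrix.one_mul, neg_smul,
    Matrix.mul_assoc]

end Matrix

theorem bordered_hat_block_form (n : ℕ)
    (K : Matrix (Fin n) (Fin n) ℝ) (k : Fin n → ℝ) (κ : ℝ)
    (Kbar : Matrix (Fin n ⊕ Fin 1) (Fin n ⊕ Fin 1) ℝ)
    (hKbar : Kbar = Matrix.fromBlocks K (Matrix.replicateCol (Fin 1) k) (Matrix.replicateRow (Fin 1) k)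
        (Matrix.of fun _ _ => κ))
    (hpsd : Kbar.PosSemidef)
    (a : ℝ) (ha : 0 < a)
    (d : ℝ)
    (hd : d = 1 / (κ + a - k ⬝ᵥ ((K + a • (1 : Matrix (Fin n) (Fin n) ℝ))⁻¹ *ᵥ k))) :
    (Kbar + a • (1 : Matrix (Fin n ⊕ Fin 1) (Fin n ⊕ Fin 1) ℝ))⁻¹ * Kbar
      = Matrix.fromBlocks
          ((K + a • 1)⁻¹ * K - (a * d) • ((K + a • 1)⁻¹ * Matrix.replicateCol (Fin 1) k *
            Matrix.replicateRow (Fin 1) k * (K + a • 1)⁻¹))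
          ((a * d) • ((K + a • 1)⁻¹ * Matrix.replicateCol (Fin 1) k))
          ((a * d) • (Matrix.replicateRow (Fin 1) k * (K + a • 1)⁻¹))
          (Matrix.of fun _ _ =>
            d * κ - d * (k ⬝ᵥ ((K + a • (1 : Matrix (Fin n) (Fin n) ℝ))⁻¹ *ᵥ k))) := by
  have hK : K.PosSemidef := by
    have h : Kbar.toBlocks₁₁.PosSemidef := hpsd.submatrix Sum.inl
    rwa [hKbar, toBlocks_fromBlocks₁₁] at h
  have hA : IsUnit (K + a • 1).det := (hK.posDef_add_smul_one ha).det_pos.ne'.isUnit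
  have hM : IsUnit (Kbar + a • 1).det := (hpsd.posDef_add_smul_one ha).det_pos.ne'.isUnit
  have hsplit : Kbar + a • 1 = fromBlocks (K + a • 1) (replicateCol (Fin 1) k)
      (replicateRow (Fin 1) k) (of fun _ _ => κ + a) := by
    rw [hKbar, ← fromBlocks_one, fromBlocks_smul, fromBlocks_add]
    simp [of_const_eq_smul_one, add_smul]
  have hs : κ + a - k ⬝ᵥ (K + a • 1)⁻¹ *ᵥ k ≠ 0 := by
    rw [hsplit, det_fromBlocks_replicateCol_replicateRow _ hA] at hM
    exact right_ne_zero_of_mul hM.ne_zero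
  rw [one_div] at hd
  have hd1 : d * (κ + a - k ⬝ᵥ (K + a • 1)⁻¹ *ᵥ k) = 1 := hd ▸ inv_mul_cancel₀ hs
  rw [inv_add_smul_one_mul hM, hsplit, inv_fromBlocks_replicateCol_replicateRow _ hA _ _ _ hs,
    inv_add_smul_one_mul hA]
  dsimp only
  rw [← hd, ← fromBlocks_one, fromBlocks_smul, sub_eq_add_neg, fromBlocks_neg, fromBlocks_add,
    fromBlocks_inj]
  refine ⟨by module, by module, by module, ?_⟩
  ext i j
  simp only [smul_of, neg_of, Subsingleton.elim i j, Matrix.add_apply, one_apply_eq, of_apply,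
    Pi.neg_apply, Pi.smul_apply, smul_eq_mul]
  linear_combination -hd1
end

section
/- Let u be monotonically increasing functions defining a conformal transducer via conformity scores: suppose for each i ∈ {1,…,n} the map y ↦ α^y_{n+1} − α^y_i is monotonically increasing with limits −∞ at −∞ and +∞ at +∞, and α are continuous. Then the function y ↦ Q(y,τ) defined by Q(y,τ) = (|{i ≤ n+1 : α^y_i < α^y_{n+1}}| + τ|{i ≤ n+1 : α^y_i = α^y_{n+1}}|)/(n+1) is monotonically increasing in y for each fixed τ ∈ [0,1], and Q(y,0) → 0 as y → −∞ and Q(y,1) → 1 as y → +∞. -/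
/-!
With `d_i(y) = α^y_{n+1} - α^y_i`, the numerator of `Q(y, τ)` is `∑ᵢ s_τ(d_i(y))` for the step
function `s_τ = smoothedStep τ`, which is monotone when `τ ∈ [0, 1]`. Hence `Q(·, τ)` is monotone,
and as `y → ∓∞` every `d_i` with `i ≤ n` eventually has the sign of `y`, while `d_{n+1} = 0`
contributes `τ`.
-/

open Filter Finset

noncomputable def smoothedStep (τ d : ℝ) : ℝ :=
  if 0 < d then 1 else if d = 0 then τ else 0

lemma smoothedStep_of_pos {τ d : ℝ} (hd : 0 < d) : smoothedStep τ d = 1 :=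
  if_pos hd

lemma smoothedStep_of_neg {τ d : ℝ} (hd : d < 0) : smoothedStep τ d = 0 := by
  simp [smoothedStep, hd.not_gt, hd.ne]

lemma smoothedStep_zero (τ : ℝ) : smoothedStep τ 0 = τ := by
  simp [smoothedStep]

lemma smoothedStep_monotone {τ : ℝ} (hτ : τ ∈ Set.Icc (0 : ℝ) 1) : Monotone (smoothedStep τ) := by
  obtain ⟨hτ0, hτ1⟩ := hτ
  intro d e hde
  unfold smoothedStep
  split_ifs <;> grind

lemma smoothedStep_sub_eq (τ a b : ℝ) :
    smoothedStep τ (b - a) = (if a < b then 1 else 0) + τ * (if a = b then 1 else 0) := by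
  unfold smoothedStep
  split_ifs <;> grind

lemma card_lt_add_mul_card_eq {ι : Type*} [Fintype ι] (τ b : ℝ) (a : ι → ℝ) :
    (#{i | a i < b} : ℝ) + τ * #{i | a i = b} = ∑ i, smoothedStep τ (b - a i) := by
  simp only [smoothedStep_sub_eq, sum_add_distrib, ← mul_sum, sum_boole]

lemma eventually_sum_smoothedStep_eq_zero {ι α : Type*} [Fintype ι] {l : Filter α}
    {f : ι → α → ℝ} (hf : ∀ i, Tendsto (f i) l atBot) (τ : ℝ) :
    ∀ᶠ y in l, ∑ i, smoothedStep τ (f i y) = 0 := by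
  filter_upwards [eventually_all.2 fun i => (hf i).eventually (eventually_lt_atBot 0)] with y hy
  simp [smoothedStep_of_neg (hy _)]

lemma eventually_sum_smoothedStep_eq_card {ι α : Type*} [Fintype ι] {l : Filter α}
    {f : ι → α → ℝ} (hf : ∀ i, Tendsto (f i) l atTop) (τ : ℝ) :
    ∀ᶠ y in l, ∑ i, smoothedStep τ (f i y) = Fintype.card ι := by
  filter_upwards [eventually_all.2 fun i => (hf i).eventually (eventually_gt_atTop 0)] with y hy
  simp [smoothedStep_of_pos (hy _)]

theorem conformal_transducer_is_rps_general (n : ℕ) (α : ℝ → Fin (n + 1) → ℝ)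
    (hmono : ∀ i : Fin n,
      Monotone fun y => α y (Fin.last n) - α y i.castSucc)
    (hbot : ∀ i : Fin n,
      Tendsto (fun y => α y (Fin.last n) - α y i.castSucc) atBot atBot)
    (htop : ∀ i : Fin n,
      Tendsto (fun y => α y (Fin.last n) - α y i.castSucc) atTop atTop)
    (Q : ℝ → ℝ → ℝ)
    (hQ : Q = fun y τ =>
      (((Finset.univ.filter fun i : Fin (n + 1) => α y i < α y (Fin.last n)).card : ℝ) +
        τ * ((Finset.univ.filter fun i : Fin (n + 1) => α y i = α y (Fin.last n)).card : ℝ)) /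
        (n + 1)) :
    (∀ τ ∈ Set.Icc (0 : ℝ) 1, Monotone fun y => Q y τ) ∧
      Tendsto (fun y => Q y 0) atBot (nhds 0) ∧
      Tendsto (fun y => Q y 1) atTop (nhds 1) := by
  have hQ_sum : ∀ y τ, Q y τ =
      (∑ i : Fin n, smoothedStep τ (α y (Fin.last n) - α y i.castSucc) + τ) / (n + 1) := by
    intro y τ
    simp only [hQ]
    rw [card_lt_add_mul_card_eq, Fin.sum_univ_castSucc, sub_self, smoothedStep_zero]
  simp only [hQ_sum]
  refine ⟨fun τ hτ => ?_, ?_, ?_⟩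
  · refine Monotone.div_const (Monotone.add_const ?_ _) (by positivity)
    exact fun y y' hy => sum_le_sum fun i _ => smoothedStep_monotone hτ (hmono i hy)
  · refine tendsto_const_nhds.congr' ?_
    filter_upwards [eventually_sum_smoothedStep_eq_zero hbot 0] with y hy
    simp [hy]
  · refine tendsto_const_nhds.congr' ?_
    filter_upwards [eventually_sum_smoothedStep_eq_card htop 1] with y hy
    rw [hy, Fintype.card_fin, div_self (by positivity)]

theorem conformal_transducer_is_rps (n : ℕ) (α : ℝ → Fin (n + 1) → ℝ)
    (hcont : ∀ i : Fin (n + 1), Continuous fun y => α y i)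
    (hmono : ∀ i : Fin n,
      Monotone fun y => α y (Fin.last n) - α y i.castSucc)
    (hbot : ∀ i : Fin n,
      Tendsto (fun y => α y (Fin.last n) - α y i.castSucc) atBot atBot)
    (htop : ∀ i : Fin n,
      Tendsto (fun y => α y (Fin.last n) - α y i.castSucc) atTop atTop)
    (Q : ℝ → ℝ → ℝ)
    (hQ : Q = fun y τ =>
      (((Finset.univ.filter fun i : Fin (n + 1) => α y i < α y (Fin.last n)).card : ℝ) +
        τ * ((Finset.univ.filter fun i : Fin (n + 1) => α y i = α y (Fin.last n)).card : ℝ)) /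
        (n + 1)) :
    (∀ τ ∈ Set.Icc (0 : ℝ) 1, Monotone fun y => Q y τ) ∧
      Tendsto (fun y => Q y 0) atBot (nhds 0) ∧
      Tendsto (fun y => Q y 1) atTop (nhds 1) :=
  conformal_transducer_is_rps_general n α hmono hbot htop Q hQ
end

section
/- Let z_1,…,z_{n+1} be exchangeable random variables (e.g., i.i.d. from a probability measure P) taking values in a measurable space Z, let A: Z^{n+1} → ℝ be a measurable function invariant under permutations of its first n arguments, define scores α_i := A(z_1,…,z_{i−1},z_{i+1},…,z_{n+1},z_i) for i ≤ n and α_{n+1} := A(z_1,…,z_{n+1}), and let τ ~ U[0,1] be independent of the z's. Then the random variable (|{i : α_i < α_{n+1}}| + τ|{i : α_i = α_{n+1}}|)/(n+1) is uniformly distributed on [0,1]. -/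
/-!
Write `x = (α_1, …, α_{n+1})` for the score vector and
`p_i = (#{j | x_j < x_i} + τ #{j | x_j = x_i}) / (n + 1)`.
For a fixed vector `x` and `u ∈ [0, 1]`, the `n + 1` events `{p_i ≤ u}` have
`τ`-probabilities summing to `(n + 1) u`: the tie block of `i` occupies the ranks `[#{x_j < x_i}, #{x_j ≤ x_i})`, and
these blocks tile `[0, n + 1)`. Since `A` is invariant under permutations fixing the last
argument, permuting the observations permutes the scores; the i.i.d. observations are
exchangeable, hence so is `x`, and all `p_i` have the same law. So `P(p_{n+1} ≤ u) = u`.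
-/

open MeasureTheory ProbabilityTheory
open scoped ENNReal

namespace ConformalPrediction

open Finset

section Ranks

variable {ι α : Type*} [Fintype ι] [LinearOrder α] (x : ι → α)

def numLT (a : α) : ℕ := #{j | x j < a}

def numEQ (a : α) : ℕ := #{j | x j = a}

/-- The ranks shared by `i` and its ties when `x` is sorted increasingly, counting from `0`. -/
def rankIco (i : ι) : Finset ℕ := Ico (numLT x (x i)) (numLT x (x i) + numEQ x (x i))

lemma numLT_add_numEQ (a : α) : numLT x a + numEQ x a = #{j | x j ≤ a} := by
  classical
  rw [numLT, numEQ, ← card_union_of_disjoint (disjoint_filter.2 fun _ _ h => h.ne), ← filter_or]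
  simp only [← le_iff_lt_or_eq]

lemma numEQ_pos (i : ι) : 0 < numEQ x (x i) := card_pos.2 ⟨i, by simp⟩

lemma numLT_add_numEQ_le_card (a : α) : numLT x a + numEQ x a ≤ Fintype.card ι :=
  numLT_add_numEQ x a ▸ card_le_univ _

lemma numLT_add_numEQ_le_numLT {a b : α} (h : a < b) : numLT x a + numEQ x a ≤ numLT x b :=
  numLT_add_numEQ x a ▸ card_le_card fun j => by simpa using fun hj => hj.trans_lt h

lemma numLT_comp_perm (σ : Equiv.Perm ι) (a : α) : numLT (x ∘ σ) a = numLT x a := by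
  simp only [numLT, card_filter]
  exact Equiv.sum_comp σ fun j => if x j < a then 1 else 0

lemma numEQ_comp_perm (σ : Equiv.Perm ι) (a : α) : numEQ (x ∘ σ) a = numEQ x a := by
  simp only [numEQ, card_filter]
  exact Equiv.sum_comp σ fun j => if x j = a then 1 else 0

lemma eq_of_mem_rankIco {i j : ι} {k : ℕ} (hi : k ∈ rankIco x i) (hj : k ∈ rankIco x j) :
    x i = x j := by
  simp only [rankIco, mem_Ico] at hi hj
  refine le_antisymm (not_lt.1 fun h => ?_) (not_lt.1 fun h => ?_)
  · have := numLT_add_numEQ_le_numLT x h; omega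
  · have := numLT_add_numEQ_le_numLT x h; omega

lemma exists_mem_rankIco {k : ℕ} (hk : k < Fintype.card ι) : ∃ i, k ∈ rankIco x i := by
  have : Nonempty ι := Fintype.card_pos_iff.1 (k.zero_le.trans_lt hk)
  obtain ⟨i₀, -, hi₀⟩ := exists_min_image univ x univ_nonempty
  have hne : (univ.filter fun i => numLT x (x i) ≤ k).Nonempty := by
    have h₀ : numLT x (x i₀) = 0 :=
      card_eq_zero.2 (filter_eq_empty_iff.2 fun j _ => not_lt_of_ge (hi₀ j (mem_univ j)))
    exact ⟨i₀, mem_filter.2 ⟨mem_univ _, h₀ ▸ k.zero_le⟩⟩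
  -- the largest value with at most `k` entries strictly below it
  obtain ⟨i, hi, hmax⟩ := exists_max_image _ x hne
  refine ⟨i, mem_Ico.2 ⟨(mem_filter.1 hi).2, not_le.1 fun hle => ?_⟩⟩
  obtain ⟨l, -, hl⟩ := exists_mem_notMem_of_card_lt_card (s := univ.filter fun j => x j ≤ x i)
    (t := univ) (by rw [← numLT_add_numEQ, card_univ]; omega)
  -- the next value above `x i` would then also have at most `k` entries below it
  obtain ⟨j, hj, hjmin⟩ := exists_min_image (univ.filter fun j => x i < x j) x
    ⟨l, by simpa using hl⟩
  have hj_le : numLT x (x j) ≤ k := by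
    refine le_trans (card_le_card fun l hl => ?_) ((numLT_add_numEQ x (x i)).symm ▸ hle)
    simp only [mem_filter, mem_univ, true_and] at hl ⊢
    exact not_lt.1 fun h => not_lt_of_ge (hjmin l (by simpa using h)) hl
  exact not_le_of_gt (mem_filter.1 hj).2 (hmax j (by simpa using hj_le))

lemma sum_inv_numEQ_eq_one {k : ℕ} (hk : k < Fintype.card ι) :
    ∑ i with k ∈ rankIco x i, ((numEQ x (x i) : ℝ))⁻¹ = 1 := by
  obtain ⟨i₀, hi₀⟩ := exists_mem_rankIco x hk
  have hblock : (univ.filter fun i => k ∈ rankIco x i) = univ.filter fun i => x i = x i₀ := by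
    ext i
    simp only [mem_filter, mem_univ, true_and]
    exact ⟨fun hi => eq_of_mem_rankIco x hi hi₀, fun h => by rwa [rankIco, h]⟩
  rw [hblock, sum_congr rfl fun i hi => by rw [(mem_filter.1 hi).2], sum_const, nsmul_eq_mul]
  exact mul_inv_cancel₀ (Nat.cast_ne_zero.2 (numEQ_pos x i₀).ne')

theorem sum_sub_div_numEQ (G : ℕ → ℝ) :
    ∑ i, (G (numLT x (x i) + numEQ x (x i)) - G (numLT x (x i))) / numEQ x (x i) =
      G (Fintype.card ι) - G 0 := by
  calc _ = ∑ i, ∑ k ∈ rankIco x i, (G (k + 1) - G k) / numEQ x (x i) := by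
        refine sum_congr rfl fun i _ => ?_
        rw [rankIco, ← sum_div, sum_Ico_sub _ (Nat.le_add_right _ _)]
    _ = ∑ k ∈ range (Fintype.card ι), ∑ i with k ∈ rankIco x i,
          (G (k + 1) - G k) / numEQ x (x i) := by
        refine sum_comm' fun i k => ?_
        have := numLT_add_numEQ_le_card x (x i)
        simp only [rankIco, mem_univ, mem_filter, mem_Ico, mem_range, true_and]
        omega
    _ = ∑ k ∈ range (Fintype.card ι), (G (k + 1) - G k) := by
        refine sum_congr rfl fun k hk => ?_
        simp only [div_eq_mul_inv, ← mul_sum, sum_inv_numEQ_eq_one x (mem_range.1 hk), mul_one]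
    _ = G (Fintype.card ι) - G 0 := sum_range_sub _ _

lemma clamp_sub_div {s c m : ℝ} (hc : 0 ≤ c) (hm : 0 < m) :
    min (max ((s - c) / m) 0) 1 = (min (max s 0) (c + m) - min (max s 0) c) / m := by
  rw [eq_div_iff hm.ne', mul_comm, mul_min_of_nonneg _ _ hm.le, mul_max_of_nonneg _ _ hm.le,
    mul_div_cancel₀ _ hm.ne', mul_zero, mul_one]
  simp only [min_def, max_def]
  split_ifs <;> linarith

theorem sum_clamp (s : ℝ) :
    ∑ i, min (max ((s - numLT x (x i)) / numEQ x (x i)) 0) 1 =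
      min (max s 0) (Fintype.card ι) := by
  have hsum := sum_sub_div_numEQ x fun k => min (max s 0) k
  simp only [Nat.cast_add, Nat.cast_zero, min_eq_right (le_max_right s 0), sub_zero] at hsum
  rw [← hsum]
  exact sum_congr rfl fun i _ =>
    clamp_sub_div (Nat.cast_nonneg _) (Nat.cast_pos.2 (numEQ_pos x i))

end Ranks

section Measurability

variable {ι : Type*} [Fintype ι]

lemma measurable_numLT_apply (i : ι) : Measurable fun x : ι → ℝ => numLT x (x i) := by
  simp only [numLT, card_filter]
  exact Finset.measurable_sum _ fun j _ => Measurable.ite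
    (measurableSet_lt (measurable_pi_apply j) (measurable_pi_apply i)) measurable_const
    measurable_const

lemma measurable_numEQ_apply (i : ι) : Measurable fun x : ι → ℝ => numEQ x (x i) := by
  simp only [numEQ, card_filter]
  exact Finset.measurable_sum _ fun j _ => Measurable.ite
    (measurableSet_eq_fun (measurable_pi_apply j) (measurable_pi_apply i)) measurable_const
    measurable_const

end Measurability

lemma restrict_Icc_zero_one_Iic (r : ℝ) :
    volume.restrict (Set.Icc (0 : ℝ) 1) (Set.Iic r) = ENNReal.ofReal (min (max r 0) 1) := by
  have hinter : Set.Iic r ∩ Set.Icc 0 1 = Set.Icc 0 (min r 1) := by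
    ext t
    simp only [Set.mem_inter_iff, Set.mem_Iic, Set.mem_Icc, le_min_iff]
    tauto
  rw [Measure.restrict_apply measurableSet_Iic, hinter, Real.volume_Icc, sub_zero]
  rcases le_total r 0 with h | h
  · simp [h, ENNReal.ofReal_of_nonpos]
  · rw [max_eq_left h]

section Exchangeable

variable {ι β : Type*} [MeasurableSpace β]

def IsExchangeable (ν : Measure (ι → β)) : Prop :=
  ∀ σ : Equiv.Perm ι, ν.map (fun x => x ∘ σ) = ν

lemma measurable_comp_perm (σ : Equiv.Perm ι) : Measurable fun x : ι → β => x ∘ σ :=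
  measurable_pi_lambda _ fun _ => measurable_pi_apply _

lemma isExchangeable_pi [Fintype ι] (P : Measure β) [SigmaFinite P] :
    IsExchangeable (Measure.pi fun _ : ι => P) := fun σ =>
  (measurePreserving_arrowCongr' (fun _ => P) (fun _ => P) σ.symm (MeasurableEquiv.refl β)
    fun _ => MeasurePreserving.id P).map_eq

lemma IsExchangeable.map {γ : Type*} [MeasurableSpace γ] {ν : Measure (ι → β)}
    (hν : IsExchangeable ν) {f : (ι → β) → ι → γ} (hf : Measurable f)
    (hfσ : ∀ (σ : Equiv.Perm ι) x, f (x ∘ σ) = f x ∘ σ) : IsExchangeable (ν.map f) := fun σ => by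
  have hcomm : (fun y => y ∘ σ) ∘ f = f ∘ fun x => x ∘ σ := funext fun x => (hfσ σ x).symm
  rw [Measure.map_map (measurable_comp_perm σ) hf, hcomm,
    ← Measure.map_map hf (measurable_comp_perm σ), hν σ]

lemma IsExchangeable.lintegral_sum [Fintype ι] {ν : Measure (ι → β)} (hν : IsExchangeable ν)
    {F : (ι → β) → ι → ℝ≥0∞} (hF : ∀ i, Measurable (F · i))
    (hFσ : ∀ (σ : Equiv.Perm ι) x i, F (x ∘ σ) i = F x (σ i)) (i : ι) :
    ∫⁻ x, ∑ j, F x j ∂ν = Fintype.card ι * ∫⁻ x, F x i ∂ν := by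
  classical
  have hj (j : ι) : ∫⁻ x, F x j ∂ν = ∫⁻ x, F x i ∂ν := by
    conv_rhs => rw [← hν (Equiv.swap i j)]
    simp only [lintegral_map (hF i) (measurable_comp_perm _), hFσ, Equiv.swap_apply_left]
  rw [lintegral_finsetSum _ fun j _ => hF j, sum_congr rfl fun j _ => hj j, sum_const,
    card_univ, nsmul_eq_mul]

end Exchangeable

section PValue

variable {ι : Type*} [Fintype ι]

noncomputable def pValue (x : ι → ℝ) (i : ι) (t : ℝ) : ℝ :=
  (numLT x (x i) + t * numEQ x (x i)) / Fintype.card ι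

lemma measurable_pValue (i : ι) : Measurable fun p : (ι → ℝ) × ℝ => pValue p.1 i p.2 :=
  ((measurable_from_top.comp ((measurable_numLT_apply i).comp measurable_fst)).add
    (measurable_snd.mul (measurable_from_top.comp
      ((measurable_numEQ_apply i).comp measurable_fst)))).div_const _

theorem IsExchangeable.map_pValue_prod [Nonempty ι] {ν : Measure (ι → ℝ)}
    [IsProbabilityMeasure ν] (hν : IsExchangeable ν) (i : ι) :
    (ν.prod (volume.restrict (Set.Icc (0 : ℝ) 1))).map (fun p => pValue p.1 i p.2) =
      volume.restrict (Set.Icc 0 1) := by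
  have hN : (0 : ℝ) < Fintype.card ι := Nat.cast_pos.2 Fintype.card_pos
  refine Measure.ext_of_Iic _ _ fun u => ?_
  let F : (ι → ℝ) → ι → ℝ≥0∞ := fun x j =>
    ENNReal.ofReal (min (max ((Fintype.card ι * u - numLT x (x j)) / numEQ x (x j)) 0) 1)
  have hF (j : ι) : Measurable (F · j) := by
    have := measurable_numLT_apply j
    have := measurable_numEQ_apply j
    fun_prop
  have hFσ (σ : Equiv.Perm ι) (x : ι → ℝ) (j : ι) : F (x ∘ σ) j = F x (σ j) := by
    simp only [F, Function.comp_apply, numLT_comp_perm, numEQ_comp_perm]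
  have hsection (x : ι → ℝ) :
      volume.restrict (Set.Icc (0 : ℝ) 1) {t | pValue x i t ≤ u} = F x i := by
    have hE : (0 : ℝ) < numEQ x (x i) := Nat.cast_pos.2 (numEQ_pos x i)
    have hset : {t | pValue x i t ≤ u} =
        Set.Iic ((Fintype.card ι * u - numLT x (x i)) / numEQ x (x i)) := by
      ext t
      simp only [Set.mem_ofPred_eq, Set.mem_Iic, pValue, div_le_iff₀ hN, le_div_iff₀ hE]
      constructor <;> intro <;> linarith
    rw [hset, restrict_Icc_zero_one_Iic]
  have hsum (x : ι → ℝ) :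
      ∑ j, F x j = Fintype.card ι * ENNReal.ofReal (min (max u 0) 1) := by
    rw [← ENNReal.ofReal_sum_of_nonneg fun j _ => le_min (le_max_right _ _) zero_le_one,
      sum_clamp, ← ENNReal.ofReal_natCast, ← ENNReal.ofReal_mul hN.le,
      mul_min_of_nonneg _ _ hN.le, mul_max_of_nonneg _ _ hN.le, mul_zero, mul_one]
  rw [Measure.map_apply (measurable_pValue i) measurableSet_Iic,
    Measure.prod_apply (measurable_pValue i measurableSet_Iic)]
  refine (ENNReal.mul_right_inj (Nat.cast_ne_zero.2 (Fintype.card_ne_zero (α := ι)))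
    (ENNReal.natCast_ne_top _)).1 ?_
  calc _ = Fintype.card ι * ∫⁻ x, F x i ∂ν := congrArg _ (lintegral_congr hsection)
    _ = ∫⁻ x, ∑ j, F x j ∂ν := (hν.lintegral_sum hF hFσ i).symm
    _ = _ := by
      rw [lintegral_congr hsum, lintegral_const, measure_univ, mul_one,
        restrict_Icc_zero_one_Iic]

end PValue

section Scores

variable {ι Z : Type*} [DecidableEq ι]

/-- The paper's `α_i`, with `o` the position of the test example. -/
def scores (A : (ι → Z) → ℝ) (o : ι) (w : ι → Z) (i : ι) : ℝ :=
  A (w ∘ Equiv.swap i o)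

lemma scores_comp_perm {A : (ι → Z) → ℝ} {o : ι}
    (hA : ∀ σ : Equiv.Perm ι, σ o = o → ∀ w, A (w ∘ σ) = A w) (σ : Equiv.Perm ι) (w : ι → Z) :
    scores A o (w ∘ σ) = scores A o w ∘ σ := by
  funext i
  have hfix : (Equiv.swap (σ i) o * σ * Equiv.swap i o) o = o := by simp
  rw [Function.comp_apply, scores, scores, ← hA _ hfix (w ∘ Equiv.swap (σ i) o)]
  congr 1
  funext j
  simp

lemma measurable_scores [MeasurableSpace Z] {A : (ι → Z) → ℝ} (hA : Measurable A) (o : ι) :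
    Measurable (scores A o) :=
  measurable_pi_lambda _ fun _ => hA.comp (measurable_comp_perm _)

end Scores

theorem map_pValue_scores_of_iIndepFun {ι Ω Z : Type*} [Fintype ι] [DecidableEq ι]
    [MeasurableSpace Ω] [MeasurableSpace Z] {μ : Measure Ω} [IsProbabilityMeasure μ]
    {z : ι → Ω → Z} (hz : ∀ i, Measurable (z i)) (hind : iIndepFun z μ)
    (P : Measure Z) [IsProbabilityMeasure P] (hlaw : ∀ i, μ.map (z i) = P)
    {A : (ι → Z) → ℝ} (hA : Measurable A) {o : ι}
    (hAinv : ∀ σ : Equiv.Perm ι, σ o = o → ∀ w, A (w ∘ σ) = A w)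
    {τ : Ω → ℝ} (hτ : Measurable τ) (hτlaw : μ.map τ = volume.restrict (Set.Icc (0 : ℝ) 1))
    (hτind : IndepFun τ (fun ω i => z i ω) μ) :
    μ.map (fun ω => pValue (scores A o fun i => z i ω) o (τ ω)) =
      volume.restrict (Set.Icc 0 1) := by
  have : Nonempty ι := ⟨o⟩
  set w : Ω → ι → Z := fun ω i => z i ω
  have hw : Measurable w := measurable_pi_lambda _ hz
  have hS := measurable_scores hA o
  have hwlaw : μ.map w = Measure.pi fun _ => P := by
    rw [hind.map_fun_eq_pi_map fun i => (hz i).aemeasurable]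
    simp_rw [hlaw]
  have hjoint : μ.map (fun ω => (w ω, τ ω)) = (μ.map w).prod (μ.map τ) :=
    (indepFun_iff_map_prod_eq_prod_map_map hw.aemeasurable hτ.aemeasurable).1 hτind.symm
  have hexch : IsExchangeable ((Measure.pi fun _ => P).map (scores A o)) :=
    (isExchangeable_pi P).map hS (scores_comp_perm hAinv)
  have : IsProbabilityMeasure ((Measure.pi fun _ => P).map (scores A o)) :=
    Measure.isProbabilityMeasure_map hS.aemeasurable
  calc _ = ((μ.map fun ω => (w ω, τ ω)).map (Prod.map (scores A o) id)).map
        (fun p => pValue p.1 o p.2) := by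
        rw [Measure.map_map (measurable_pValue o) (hS.prodMap measurable_id),
          Measure.map_map ((measurable_pValue o).comp (hS.prodMap measurable_id))
            (hw.prodMk hτ)]
        rfl
    _ = _ := by
      rw [hjoint, ← Measure.map_prod_map _ _ hS measurable_id, Measure.map_id, hwlaw, hτlaw]
      exact hexch.map_pValue_prod o

end ConformalPrediction

open ConformalPrediction

theorem conformal_transducer_validity (n : ℕ)
    {Z : Type*} [MeasurableSpace Z]
    (P : Measure Z) [IsProbabilityMeasure P]
    {Ω : Type*} [MeasurableSpace Ω] (μ : Measure Ω) [IsProbabilityMeasure μ]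
    (z : Fin (n + 1) → Ω → Z)
    (hzmeas : ∀ i, Measurable (z i))
    (hzindep : iIndepFun z μ)
    (hzlaw : ∀ i, Measure.map (z i) μ = P)
    (A : (Fin (n + 1) → Z) → ℝ) (hA : Measurable A)
    (hAinv : ∀ σ : Equiv.Perm (Fin (n + 1)), σ (Fin.last n) = Fin.last n →
      ∀ w : Fin (n + 1) → Z, A (w ∘ σ) = A w)
    (α : Fin (n + 1) → Ω → ℝ)
    (hα : α = fun i ω => A fun j => z (Equiv.swap i (Fin.last n) j) ω)
    (τ : Ω → ℝ) (hτmeas : Measurable τ)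
    (hτlaw : Measure.map τ μ = volume.restrict (Set.Icc (0 : ℝ) 1))
    (hτindep : IndepFun τ (fun ω i => z i ω) μ) :
    Measure.map (fun ω =>
        (((Finset.univ.filter fun i : Fin (n + 1) =>
              α i ω < α (Fin.last n) ω).card : ℝ) +
          τ ω * ((Finset.univ.filter fun i : Fin (n + 1) =>
              α i ω = α (Fin.last n) ω).card : ℝ)) / (n + 1)) μ
      = volume.restrict (Set.Icc (0 : ℝ) 1) := by
  subst hα
  convert map_pValue_scores_of_iIndepFun hzmeas hzindep P hzlaw hA hAinv hτmeas hτlaw hτindep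
    using 2 with ω
  simp only [pValue, scores, Fintype.card_fin, Nat.cast_add, Nat.cast_one]
  rfl
end
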